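/- If σ ∈ L*_up(ψ, N) with ψ(x) = c/x and c ≥ 1/e, then E(H_{n,σ}) ≤ (ec − 1)·ln(n)·(1 + o(1)) as n → ∞. -/

import Mathlib

inductive BTree
  | leaf : BTree
  | node : BTree → BTree → BTree
deriving DecidableEq

def BTree.size : BTree → ℕ
  | .leaf => 1
  | .node l r => l.size + r.size

def BTree.height : BTree → ℕ
  | .leaf => 0
  | .node l r => 1 + max l.height r.height

noncomputable def Pσ (σ : ℕ → ℕ → ℝ) : BTree → ℝ
  | .leaf => 1
  | .node l r => σ l.size r.size * Pσ σ l * Pσ σ r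

def trees : ℕ → Finset BTree
  | 0 => ∅
  | 1 => {BTree.leaf}
  | (n+2) => (Finset.Ico 1 (n+2)).attach.biUnion
      (fun k => ((trees k.1) ×ˢ (trees (n+2-k.1))).image (fun p => BTree.node p.1 p.2))
  decreasing_by
  · exact (Finset.mem_Ico.mp k.2).2
  · have h := (Finset.mem_Ico.mp k.2).1; omega

noncomputable def expPow (σ : ℕ → ℕ → ℝ) (φ : ℝ) (n : ℕ) : ℝ :=
  ∑ t ∈ trees n, Pσ σ t * φ ^ t.height

noncomputable def expH (σ : ℕ → ℕ → ℝ) (n : ℕ) : ℝ :=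
  ∑ t ∈ trees n, Pσ σ t * (t.height : ℝ)

open Filter Asymptotics
open Filter Asymptotics Finset

lemma trees_succ_succ (n : ℕ) : trees (n+2) = (Finset.Ico 1 (n+2)).attach.biUnion
      (fun k => ((trees k.1) ×ˢ (trees (n+2-k.1))).image (fun p => BTree.node p.1 p.2)) := by
  rw [trees]

lemma size_of_mem_trees : ∀ n, ∀ t ∈ trees n, BTree.size t = n := by
  intro n
  induction n using Nat.strong_induction_on with
  | _ n ih =>
    match n with
    | 0 => intro t ht; simp [trees] at ht
    | 1 => intro t ht; simp only [trees, Finset.mem_singleton] at ht; subst ht; rfl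
    | (m+2) =>
      intro t ht
      rw [trees_succ_succ] at ht
      simp only [Finset.mem_biUnion, Finset.mem_attach, Finset.mem_image, Finset.mem_product,
        true_and] at ht
      obtain ⟨k, p, ⟨hl, hr⟩, rfl⟩ := ht
      have hk := Finset.mem_Ico.mp k.2
      have h1 := ih k.1 (by omega) p.1 hl
      have h2 := ih (m+2-k.1) (by omega) p.2 hr
      simp only [BTree.size, h1, h2]; omega

lemma sum_trees_eq (n : ℕ) (f : BTree → ℝ) :
    ∑ t ∈ trees (n+2), f t =
      ∑ k ∈ Finset.Ico 1 (n+2), ∑ l ∈ trees k, ∑ r ∈ trees (n+2-k), f (BTree.node l r) := by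
  rw [trees_succ_succ, Finset.sum_biUnion]
  · rw [← Finset.sum_attach (Finset.Ico 1 (n+2))
      (fun k => ∑ l ∈ trees k, ∑ r ∈ trees (n+2-k), f (BTree.node l r))]
    refine Finset.sum_congr rfl fun k _ => ?_
    rw [Finset.sum_image, Finset.sum_product]
    intro p hp q hq h
    simp only [BTree.node.injEq] at h
    exact Prod.ext h.1 h.2
  · intro a _ b _ hab
    simp only [Function.onFun, Finset.disjoint_left]
    intro t hta htb
    simp only [Finset.mem_image, Finset.mem_product] at hta htb
    obtain ⟨p, ⟨hp1, _⟩, rfl⟩ := hta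
    obtain ⟨q, ⟨hq1, _⟩, he⟩ := htb
    simp only [BTree.node.injEq] at he
    apply hab
    have h1 := size_of_mem_trees _ _ hp1
    have h2 := size_of_mem_trees _ _ hq1
    exact Subtype.ext (by rw [← h1, ← h2, he.1])
section
variable {σ : ℕ → ℕ → ℝ} (hσ : ∀ i j, 0 ≤ σ i j)
include hσ

lemma Pσ_nonneg : ∀ t, 0 ≤ Pσ σ t := by
  intro t
  induction t with
  | leaf => norm_num [Pσ]
  | node l r hl hr => exact mul_nonneg (mul_nonneg (hσ _ _) hl) hr

lemma sum_Pσ_le_one (hsum : ∀ k, 2 ≤ k → ∑ i ∈ Finset.Ico 1 k, σ i (k - i) = 1) :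
    ∀ n, ∑ t ∈ trees n, Pσ σ t ≤ 1 := by
  intro n
  induction n using Nat.strong_induction_on with
  | _ n ih =>
    match n with
    | 0 => simp [trees]
    | 1 => simp [trees, Pσ]
    | (m+2) =>
      rw [sum_trees_eq]
      calc ∑ k ∈ Finset.Ico 1 (m+2), ∑ l ∈ trees k, ∑ r ∈ trees (m+2-k), Pσ σ (BTree.node l r)
          ≤ ∑ k ∈ Finset.Ico 1 (m+2), σ k (m+2-k) := by
            refine Finset.sum_le_sum fun k hk => ?_
            have hk' := Finset.mem_Ico.mp hk
            have key : ∀ l ∈ trees k, ∀ r ∈ trees (m+2-k),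
                Pσ σ (BTree.node l r) = σ k (m+2-k) * (Pσ σ l * Pσ σ r) := by
              intro l hl r hr
              show σ l.size r.size * Pσ σ l * Pσ σ r = _
              rw [size_of_mem_trees _ _ hl, size_of_mem_trees _ _ hr, mul_assoc]
            calc ∑ l ∈ trees k, ∑ r ∈ trees (m+2-k), Pσ σ (BTree.node l r)
                = σ k (m+2-k) * ((∑ l ∈ trees k, Pσ σ l) * (∑ r ∈ trees (m+2-k), Pσ σ r)) := by
                  rw [Finset.sum_mul_sum, Finset.mul_sum]
                  refine Finset.sum_congr rfl fun l hl => ?_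
                  rw [Finset.mul_sum]
                  exact Finset.sum_congr rfl fun r hr => key l hl r hr
              _ ≤ σ k (m+2-k) * 1 := by
                  refine mul_le_mul_of_nonneg_left ?_ (hσ _ _)
                  have h1 := ih k (by omega)
                  have h2 := ih (m+2-k) (by omega)
                  have n1 : 0 ≤ ∑ l ∈ trees k, Pσ σ l :=
                    Finset.sum_nonneg fun t _ => Pσ_nonneg hσ t
                  have n2 : 0 ≤ ∑ r ∈ trees (m+2-k), Pσ σ r :=
                    Finset.sum_nonneg fun t _ => Pσ_nonneg hσ t
                  calc (∑ l ∈ trees k, Pσ σ l) * (∑ r ∈ trees (m+2-k), Pσ σ r)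
                      ≤ 1 * 1 := mul_le_mul h1 h2 n2 zero_le_one
                    _ = 1 := one_mul 1
              _ = σ k (m+2-k) := mul_one _
        _ = 1 := hsum (m+2) (by omega)
end
lemma sum_helper {α β : Type*} (s : Finset α) (t : Finset β) (C : ℝ) (f u : α → ℝ)
    (g v : β → ℝ) :
    ∑ l ∈ s, ∑ r ∈ t, C * (f l * g r + u l * v r) =
      C * ((∑ l ∈ s, f l) * (∑ r ∈ t, g r) + (∑ l ∈ s, u l) * (∑ r ∈ t, v r)) := by
  rw [Finset.sum_mul_sum, Finset.sum_mul_sum, mul_add, Finset.mul_sum, Finset.mul_sum,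
    ← Finset.sum_add_distrib]
  refine Finset.sum_congr rfl fun l _ => ?_
  simp only [mul_add, Finset.sum_add_distrib, Finset.mul_sum]

section
variable {σ : ℕ → ℕ → ℝ} (hσ : ∀ i j, 0 ≤ σ i j)
include hσ

lemma expPow_nonneg (n : ℕ) : 0 ≤ expPow σ (Real.exp 1) n :=
  Finset.sum_nonneg fun t _ => mul_nonneg (Pσ_nonneg hσ t)
    (pow_nonneg (Real.exp_nonneg 1) _)

lemma expPow_rec (hsum : ∀ k, 2 ≤ k → ∑ i ∈ Finset.Ico 1 k, σ i (k - i) = 1) (m : ℕ) :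
    expPow σ (Real.exp 1) (m+2) ≤ Real.exp 1 *
      ∑ k ∈ Finset.Ico 1 (m+2), (σ k (m+2-k) + σ (m+2-k) k) * expPow σ (Real.exp 1) k := by
  set e := Real.exp 1 with he
  have he1 : (1:ℝ) ≤ e := Real.one_le_exp zero_le_one
  have he0 : (0:ℝ) ≤ e := le_trans zero_le_one he1
  set S := fun n => ∑ t ∈ trees n, Pσ σ t with hS
  have hS1 : ∀ n, S n ≤ 1 := sum_Pσ_le_one hσ hsum
  have hS0 : ∀ n, 0 ≤ S n := fun n => Finset.sum_nonneg fun t _ => Pσ_nonneg hσ t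
  have hY0 : ∀ n, 0 ≤ expPow σ e n := expPow_nonneg hσ
  have main : ∀ k ∈ Finset.Ico 1 (m+2),
      (∑ l ∈ trees k, ∑ r ∈ trees (m+2-k), Pσ σ (BTree.node l r) * e ^ (BTree.node l r).height)
        ≤ e * (σ k (m+2-k) * expPow σ e k) + e * (σ k (m+2-k) * expPow σ e (m+2-k)) := by
    intro k hk
    set m' := m+2-k with hm'
    have step : ∀ l ∈ trees k, ∀ r ∈ trees m',
        Pσ σ (BTree.node l r) * e ^ (BTree.node l r).height ≤
          e * σ k m' * ((Pσ σ l * e ^ l.height) * Pσ σ r + Pσ σ l * (Pσ σ r * e ^ r.height)) := by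
      intro l hl r hr
      have hP : Pσ σ (BTree.node l r) = σ k m' * (Pσ σ l * Pσ σ r) := by
        show σ l.size r.size * Pσ σ l * Pσ σ r = _
        rw [size_of_mem_trees _ _ hl, size_of_mem_trees _ _ hr, mul_assoc]
      have hh : (BTree.node l r).height = 1 + max l.height r.height := rfl
      have hmax : e ^ max l.height r.height ≤ e ^ l.height + e ^ r.height := by
        rcases le_total l.height r.height with h | h
        · rw [max_eq_right h]
          exact le_add_of_nonneg_left (pow_nonneg he0 _)
        · rw [max_eq_left h]
          exact le_add_of_nonneg_right (pow_nonneg he0 _)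
      rw [hP, hh, pow_add, pow_one]
      have hPl := Pσ_nonneg hσ l
      have hPr := Pσ_nonneg hσ r
      calc σ k m' * (Pσ σ l * Pσ σ r) * (e * e ^ max l.height r.height)
          ≤ σ k m' * (Pσ σ l * Pσ σ r) * (e * (e ^ l.height + e ^ r.height)) := by
            refine mul_le_mul_of_nonneg_left ?_ (mul_nonneg (hσ _ _) (mul_nonneg hPl hPr))
            exact mul_le_mul_of_nonneg_left hmax he0
        _ = e * σ k m' * ((Pσ σ l * e ^ l.height) * Pσ σ r + Pσ σ l * (Pσ σ r * e ^ r.height)) := by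
            ring
    calc (∑ l ∈ trees k, ∑ r ∈ trees m', Pσ σ (BTree.node l r) * e ^ (BTree.node l r).height)
        ≤ ∑ l ∈ trees k, ∑ r ∈ trees m',
            e * σ k m' * ((Pσ σ l * e ^ l.height) * Pσ σ r + Pσ σ l * (Pσ σ r * e ^ r.height)) :=
          Finset.sum_le_sum fun l hl => Finset.sum_le_sum fun r hr => step l hl r hr
      _ = e * σ k m' * (expPow σ e k * S m' + S k * expPow σ e m') := by
          rw [expPow, expPow, hS, sum_helper]
      _ ≤ e * σ k m' * (expPow σ e k * 1 + 1 * expPow σ e m') := by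
          refine mul_le_mul_of_nonneg_left ?_ (mul_nonneg he0 (hσ _ _))
          exact add_le_add (mul_le_mul_of_nonneg_left (hS1 _) (hY0 _))
            (mul_le_mul_of_nonneg_right (hS1 _) (hY0 _))
      _ = e * (σ k m' * expPow σ e k) + e * (σ k m' * expPow σ e m') := by ring
  have reindex : ∑ k ∈ Finset.Ico 1 (m+2), σ k (m+2-k) * expPow σ e (m+2-k)
      = ∑ k ∈ Finset.Ico 1 (m+2), σ (m+2-k) k * expPow σ e k := by
    refine Finset.sum_nbij' (fun k => m+2-k) (fun k => m+2-k) ?_ ?_ ?_ ?_ ?_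
    · intro a ha; simp only [Finset.mem_Ico] at ha ⊢; omega
    · intro a ha; simp only [Finset.mem_Ico] at ha ⊢; omega
    · intro a ha; simp only [Finset.mem_Ico] at ha; omega
    · intro a ha; simp only [Finset.mem_Ico] at ha; omega
    · intro a ha; simp only [Finset.mem_Ico] at ha
      rw [Nat.sub_sub_self (by omega : a ≤ m + 2)]
  calc expPow σ e (m+2)
      = ∑ k ∈ Finset.Ico 1 (m+2), ∑ l ∈ trees k, ∑ r ∈ trees (m+2-k),
          Pσ σ (BTree.node l r) * e ^ (BTree.node l r).height := by
        rw [expPow, sum_trees_eq]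
    _ ≤ ∑ k ∈ Finset.Ico 1 (m+2),
          (e * (σ k (m+2-k) * expPow σ e k) + e * (σ k (m+2-k) * expPow σ e (m+2-k))) :=
        Finset.sum_le_sum main
    _ = e * ∑ k ∈ Finset.Ico 1 (m+2), (σ k (m+2-k) + σ (m+2-k) k) * expPow σ e k := by
        rw [Finset.sum_add_distrib, ← Finset.mul_sum, ← Finset.mul_sum, reindex, ← mul_add,
          ← Finset.sum_add_distrib]
        congr 1
        exact Finset.sum_congr rfl fun k _ => by ring

end
lemma sum_rpow_le {β : ℝ} (hβ : 0 ≤ β) (n : ℕ) :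
    (β+1) * ∑ k ∈ Finset.Ico 1 n, (k:ℝ) ^ β ≤ (n:ℝ) ^ (β+1) := by
  have step : ∀ k ∈ Finset.Ico 1 n,
      (β+1) * (k:ℝ) ^ β ≤ ((k+1:ℕ):ℝ) ^ (β+1) - ((k:ℕ):ℝ) ^ (β+1) := by
    intro k hk
    have hk1 : 1 ≤ k := (Finset.mem_Ico.mp hk).1
    set x : ℝ := (k:ℝ) with hxdef
    have hx : (1:ℝ) ≤ x := by rw [hxdef]; exact_mod_cast hk1
    have h0 : (0:ℝ) < x := lt_of_lt_of_le one_pos hx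
    have hinv : (0:ℝ) ≤ 1/x := by positivity
    have hb : 1 + (β+1) * (1/x) ≤ (1 + 1/x) ^ (β+1) :=
      one_add_mul_self_le_rpow_one_add (by linarith) (by linarith)
    have hx1 : ((k+1:ℕ):ℝ) = x * (1 + 1/x) := by
      push_cast; field_simp; rfl
    have hmul : ((k+1:ℕ):ℝ) ^ (β+1) = x ^ (β+1) * (1 + 1/x) ^ (β+1) := by
      rw [hx1, Real.mul_rpow h0.le (by positivity)]
    have hxb : x ^ (β+1) = x ^ β * x := Real.rpow_add_one h0.ne' β
    have key : x ^ (β+1) * (1 + (β+1) * (1/x)) = x ^ (β+1) + (β+1) * x ^ β := by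
      rw [hxb]; field_simp
    have h2 : x ^ (β+1) * (1 + (β+1) * (1/x)) ≤ x ^ (β+1) * (1 + 1/x) ^ (β+1) :=
      mul_le_mul_of_nonneg_left hb (Real.rpow_nonneg h0.le _)
    rw [key] at h2
    rw [hmul]
    linarith
  calc (β+1) * ∑ k ∈ Finset.Ico 1 n, (k:ℝ) ^ β
      = ∑ k ∈ Finset.Ico 1 n, (β+1) * (k:ℝ) ^ β := Finset.mul_sum _ _ _
    _ ≤ ∑ k ∈ Finset.Ico 1 n, (((k+1:ℕ):ℝ) ^ (β+1) - ((k:ℕ):ℝ) ^ (β+1)) :=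
        Finset.sum_le_sum step
    _ ≤ ∑ k ∈ Finset.range n, (((k+1:ℕ):ℝ) ^ (β+1) - ((k:ℕ):ℝ) ^ (β+1)) := by
        refine Finset.sum_le_sum_of_subset_of_nonneg ?_ fun k _ _ => ?_
        · intro k hk; simp only [Finset.mem_Ico] at hk; exact Finset.mem_range.mpr hk.2
        · have h1 : ((k:ℕ):ℝ) ≤ ((k+1:ℕ):ℝ) := by push_cast; linarith
          have h2 : ((k:ℕ):ℝ) ^ (β+1) ≤ ((k+1:ℕ):ℝ) ^ (β+1) :=
            Real.rpow_le_rpow (by positivity) h1 (by linarith)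
          linarith
    _ = ((n:ℕ):ℝ) ^ (β+1) - ((0:ℕ):ℝ) ^ (β+1) :=
        Finset.sum_range_sub (fun k => ((k:ℕ):ℝ) ^ (β+1)) n
    _ ≤ (n:ℝ) ^ (β+1) := by
        simp only [Nat.cast_zero]
        rw [Real.zero_rpow (by linarith)]
        simp
theorem expected_height_upper_bounded_log (σ : ℕ → ℕ → ℝ) (c : ℝ)
    (hc : (Real.exp 1)⁻¹ ≤ c) (N : ℕ)
    (hrange : ∀ i j, 0 ≤ σ i j ∧ σ i j ≤ 1)
    (hsum : ∀ k, 2 ≤ k → ∑ i ∈ Finset.Ico 1 k, σ i (k - i) = 1)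
    (hub : ∀ n : ℕ, N ≤ n → ∀ i : ℕ, 1 ≤ i → i ≤ n - 1 →
      σ i (n - i) + σ (n - i) i ≤ c / (n : ℝ)) :
    ∃ g : ℕ → ℝ, g =o[atTop] (fun _ => (1 : ℝ)) ∧
      ∀ᶠ n : ℕ in atTop,
        expH σ n ≤ (Real.exp 1 * c - 1) * Real.log n * (1 + g n) := by
  classical
  have hσ : ∀ i j, 0 ≤ σ i j := fun i j => (hrange i j).1
  set e : ℝ := Real.exp 1 with he
  have he1 : (1:ℝ) ≤ e := Real.one_le_exp zero_le_one
  -- c ≥ 2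
  have hc2 : (2:ℝ) ≤ c := by
    set n := max N 2 with hn
    have hn2 : 2 ≤ n := le_max_right _ _
    have hnN : N ≤ n := le_max_left _ _
    have hnpos : (0:ℝ) < (n:ℝ) := by
      have : (0:ℕ) < n := by omega
      exact_mod_cast this
    have h1 : ∑ i ∈ Finset.Ico 1 n, σ i (n - i) = 1 := hsum n hn2
    have h2 : ∑ i ∈ Finset.Ico 1 n, σ (n - i) i = 1 := by
      rw [← h1]
      refine Finset.sum_nbij' (fun i => n - i) (fun i => n - i) ?_ ?_ ?_ ?_ ?_
      · intro a ha; simp only [Finset.mem_Ico] at ha ⊢; omega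
      · intro a ha; simp only [Finset.mem_Ico] at ha ⊢; omega
      · intro a ha; simp only [Finset.mem_Ico] at ha; omega
      · intro a ha; simp only [Finset.mem_Ico] at ha; omega
      · intro a ha; simp only [Finset.mem_Ico] at ha
        rw [Nat.sub_sub_self (by omega : a ≤ n)]
    have h3 : (2:ℝ) ≤ ∑ i ∈ Finset.Ico 1 n, (c / (n:ℝ)) := by
      have hb : ∑ i ∈ Finset.Ico 1 n, (σ i (n - i) + σ (n - i) i)
          ≤ ∑ i ∈ Finset.Ico 1 n, c / (n:ℝ) := by
        refine Finset.sum_le_sum fun i hi => ?_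
        have hi' := Finset.mem_Ico.mp hi
        exact hub n hnN i hi'.1 (by omega)
      rw [Finset.sum_add_distrib, h1, h2] at hb
      linarith
    have hcn : 0 ≤ c / (n:ℝ) :=
      le_trans (add_nonneg (hσ _ _) (hσ _ _)) (hub n hnN 1 le_rfl (by omega))
    have hcard : ∑ i ∈ Finset.Ico 1 n, (c / (n:ℝ)) = ((n-1:ℕ):ℝ) * (c / (n:ℝ)) := by
      rw [Finset.sum_const, Nat.card_Ico]; simp [nsmul_eq_mul]
    have h4 : ((n-1:ℕ):ℝ) * (c / (n:ℝ)) ≤ (n:ℝ) * (c / (n:ℝ)) := by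
      refine mul_le_mul_of_nonneg_right ?_ hcn
      exact_mod_cast Nat.sub_le n 1
    have heq : (n:ℝ) * (c / (n:ℝ)) = c := by field_simp
    rw [hcard] at h3
    linarith
  set β : ℝ := e * c - 1 with hβ
  have hβ1 : (1:ℝ) ≤ β := by nlinarith
  have hβ0 : (0:ℝ) < β := lt_of_lt_of_le one_pos hβ1
  set N0 := max N 2 with hN0
  set Y := expPow σ e with hYdef
  have hY0 : ∀ n, 0 ≤ Y n := expPow_nonneg hσ
  set K : ℝ := 1 + ∑ k ∈ Finset.range N0, Y k with hK
  have hK1 : (1:ℝ) ≤ K := by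
    have : 0 ≤ ∑ k ∈ Finset.range N0, Y k := Finset.sum_nonneg fun k _ => hY0 k
    linarith
  have hK0 : (0:ℝ) < K := lt_of_lt_of_le one_pos hK1
  have hKY : ∀ k, k < N0 → Y k ≤ K := by
    intro k hk
    have := Finset.single_le_sum (f := Y) (fun i _ => hY0 i) (Finset.mem_range.mpr hk)
    linarith
  have hec : β + 1 = e * c := by rw [hβ]; ring
  have hecpos : (0:ℝ) < e * c := by nlinarith
  have hcpos : (0:ℝ) < c := by linarith
  -- main induction
  have hmain : ∀ n, 1 ≤ n → Y n ≤ K * (n:ℝ) ^ β := by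
    intro n
    induction n using Nat.strong_induction_on with
    | _ n ih =>
      intro hn1
      have hnr1 : (1:ℝ) ≤ (n:ℝ) := by exact_mod_cast hn1
      have hnb1 : (1:ℝ) ≤ (n:ℝ) ^ β := Real.one_le_rpow hnr1 hβ0.le
      rcases lt_or_ge n N0 with hlt | hge
      · calc Y n ≤ K := hKY n hlt
          _ = K * 1 := (mul_one K).symm
          _ ≤ K * (n:ℝ) ^ β := by nlinarith
      · obtain ⟨m, rfl⟩ : ∃ m, n = m + 2 := ⟨n - 2, by have := le_trans (le_max_right N 2) hge; omega⟩
        have hNle : N ≤ m + 2 := le_trans (le_max_left N 2) hge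
        have hnpos : (0:ℝ) < ((m+2:ℕ):ℝ) := by positivity
        have step1 : Y (m+2) ≤ e * ∑ k ∈ Finset.Ico 1 (m+2),
            (σ k (m+2-k) + σ (m+2-k) k) * Y k := expPow_rec hσ hsum m
        have step2 : ∑ k ∈ Finset.Ico 1 (m+2), (σ k (m+2-k) + σ (m+2-k) k) * Y k
            ≤ ∑ k ∈ Finset.Ico 1 (m+2), (c / ((m+2:ℕ):ℝ)) * (K * (k:ℝ) ^ β) := by
          refine Finset.sum_le_sum fun k hk => ?_
          have hk' := Finset.mem_Ico.mp hk
          have h1 : σ k (m+2-k) + σ (m+2-k) k ≤ c / ((m+2:ℕ):ℝ) := by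
            have := hub (m+2) hNle k hk'.1 (by omega)
            exact_mod_cast this
          have h2 : Y k ≤ K * (k:ℝ) ^ β := ih k (by omega) hk'.1
          have h3 : 0 ≤ σ k (m+2-k) + σ (m+2-k) k := add_nonneg (hσ _ _) (hσ _ _)
          exact mul_le_mul h1 h2 (hY0 k) (by positivity)
        have step3 : ∑ k ∈ Finset.Ico 1 (m+2), (c / ((m+2:ℕ):ℝ)) * (K * (k:ℝ) ^ β)
            = (c / ((m+2:ℕ):ℝ)) * K * ∑ k ∈ Finset.Ico 1 (m+2), (k:ℝ) ^ β := by
          rw [Finset.mul_sum]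
          exact Finset.sum_congr rfl fun k _ => by ring
        have step4 : ∑ k ∈ Finset.Ico 1 (m+2), (k:ℝ) ^ β ≤ ((m+2:ℕ):ℝ) ^ (β+1) / (β+1) := by
          rw [le_div_iff₀ (by linarith)]
          have := sum_rpow_le (by linarith : (0:ℝ) ≤ β) (m+2)
          linarith [this]
        have hpow : ((m+2:ℕ):ℝ) ^ (β+1) = ((m+2:ℕ):ℝ) ^ β * ((m+2:ℕ):ℝ) :=
          Real.rpow_add_one hnpos.ne' β
        calc Y (m+2) ≤ e * ((c / ((m+2:ℕ):ℝ)) * K * (((m+2:ℕ):ℝ) ^ (β+1) / (β+1))) := by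
              have h5 : (0:ℝ) ≤ (c / ((m+2:ℕ):ℝ)) * K := by positivity
              calc Y (m+2) ≤ e * ∑ k ∈ Finset.Ico 1 (m+2),
                    (σ k (m+2-k) + σ (m+2-k) k) * Y k := step1
                _ ≤ e * ((c / ((m+2:ℕ):ℝ)) * K * (((m+2:ℕ):ℝ) ^ (β+1) / (β+1))) := by
                    refine mul_le_mul_of_nonneg_left ?_ (by linarith)
                    calc ∑ k ∈ Finset.Ico 1 (m+2), (σ k (m+2-k) + σ (m+2-k) k) * Y k
                        ≤ ∑ k ∈ Finset.Ico 1 (m+2), (c / ((m+2:ℕ):ℝ)) * (K * (k:ℝ) ^ β) := step2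
                      _ = (c / ((m+2:ℕ):ℝ)) * K * ∑ k ∈ Finset.Ico 1 (m+2), (k:ℝ) ^ β := step3
                      _ ≤ (c / ((m+2:ℕ):ℝ)) * K * (((m+2:ℕ):ℝ) ^ (β+1) / (β+1)) :=
                          mul_le_mul_of_nonneg_left step4 h5
          _ = K * ((m+2:ℕ):ℝ) ^ β := by
              rw [hpow, hec]
              have hne : ((m+2:ℕ):ℝ) ≠ 0 := hnpos.ne'
              have h6 : e * c ≠ 0 := hecpos.ne'
              field_simp
  -- final bound
  have hfinal : ∀ n : ℕ, 1 ≤ n → expH σ n ≤ β * Real.log n + (Real.log K + 1) := by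
    intro n hn1
    have hnr1 : (1:ℝ) ≤ (n:ℝ) := by exact_mod_cast hn1
    have hnpos : (0:ℝ) < (n:ℝ) := by linarith
    set a : ℝ := Real.log K + β * Real.log n with ha
    have ha0 : 0 ≤ a := by
      have := Real.log_nonneg hK1
      have := Real.log_nonneg hnr1
      have := hβ0.le
      rw [ha]; nlinarith
    have hexpa : Real.exp a = K * (n:ℝ) ^ β := by
      rw [ha, Real.exp_add, Real.exp_log hK0, ← Real.log_rpow hnpos,
        Real.exp_log (Real.rpow_pos_of_pos hnpos β)]
    have hpt : ∀ t : BTree, ((t.height : ℝ)) ≤ a + e ^ t.height * Real.exp (-a) := by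
      intro t
      have h1 : (t.height : ℝ) - a + 1 ≤ Real.exp ((t.height : ℝ) - a) :=
        Real.add_one_le_exp _
      have h2 : Real.exp ((t.height : ℝ) - a) = Real.exp (t.height : ℝ) * Real.exp (-a) := by
        rw [← Real.exp_add]; ring_nf
      have h3 : e ^ t.height = Real.exp (t.height : ℝ) := by
        rw [he, ← Real.exp_nat_mul]; norm_num
      rw [h3, ← h2]; linarith
    have hsplit : expH σ n ≤ a * (∑ t ∈ trees n, Pσ σ t) + Real.exp (-a) * Y n := by
      rw [expH]
      have : ∀ t ∈ trees n, Pσ σ t * (t.height : ℝ) ≤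
          Pσ σ t * a + (Pσ σ t * e ^ t.height) * Real.exp (-a) := by
        intro t _
        have := mul_le_mul_of_nonneg_left (hpt t) (Pσ_nonneg hσ t)
        nlinarith [Pσ_nonneg hσ t]
      calc ∑ t ∈ trees n, Pσ σ t * (t.height : ℝ)
          ≤ ∑ t ∈ trees n, (Pσ σ t * a + (Pσ σ t * e ^ t.height) * Real.exp (-a)) :=
            Finset.sum_le_sum this
        _ = a * (∑ t ∈ trees n, Pσ σ t) + Real.exp (-a) * Y n := by
            rw [Finset.sum_add_distrib, hYdef, expPow, Finset.mul_sum, Finset.mul_sum]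
            congr 1
            · exact Finset.sum_congr rfl fun t _ => by ring
            · exact Finset.sum_congr rfl fun t _ => by ring
    have hS1 : (∑ t ∈ trees n, Pσ σ t) ≤ 1 := sum_Pσ_le_one hσ hsum n
    have hS0 : (0:ℝ) ≤ ∑ t ∈ trees n, Pσ σ t := Finset.sum_nonneg fun t _ => Pσ_nonneg hσ t
    have hY : Y n ≤ K * (n:ℝ) ^ β := hmain n hn1
    have hee : Real.exp (-a) * Y n ≤ 1 := by
      have : Real.exp (-a) * Y n ≤ Real.exp (-a) * (K * (n:ℝ) ^ β) :=
        mul_le_mul_of_nonneg_left hY (Real.exp_nonneg _)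
      rw [← hexpa, ← Real.exp_add] at this
      simpa using this
    calc expH σ n ≤ a * (∑ t ∈ trees n, Pσ σ t) + Real.exp (-a) * Y n := hsplit
      _ ≤ a * 1 + 1 := add_le_add (mul_le_mul_of_nonneg_left hS1 ha0) hee
      _ = β * Real.log n + (Real.log K + 1) := by rw [ha]; ring
  -- assemble
  set C : ℝ := Real.log K + 1 with hC
  have hC0 : 0 ≤ C := by
    have := Real.log_nonneg hK1
    rw [hC]; linarith
  refine ⟨fun n => if 2 ≤ n then C / (β * Real.log n) else 0, ?_, ?_⟩
  · rw [isLittleO_one_iff]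
    have hbase : Tendsto (fun n : ℕ => C / (β * Real.log n)) atTop (nhds 0) := by
      apply Tendsto.div_atTop (tendsto_const_nhds)
      exact Tendsto.const_mul_atTop hβ0
        (Real.tendsto_log_atTop.comp tendsto_natCast_atTop_atTop)
    refine hbase.congr' ?_
    filter_upwards [eventually_ge_atTop 2] with n hn
    rw [if_pos hn]
  · filter_upwards [eventually_ge_atTop 2] with n hn
    have hn1 : 1 ≤ n := by omega
    have hlog : 0 < Real.log n := Real.log_pos (by exact_mod_cast (by omega : 2 ≤ n))
    rw [if_pos hn]
    have hne : β * Real.log n ≠ 0 := by positivity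
    have : β * Real.log n * (1 + C / (β * Real.log n)) = β * Real.log n + C := by
      field_simp
    rw [this]
    exact hfinal n hn1
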